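/- Let X be a smooth projective curve over an algebraically closed field k, φ : X → P^1 a finite morphism, and E a vector bundle on X with H^0(X,E) = 0 = H^1(X,E). Then the direct image φ_*E is isomorphic to a direct sum of copies of O_{P^1}(-1). -/
import Mathlib


/-- An abstract interface encoding the geometric situation: vector bundles on the
projective line `P¹_k` and on an irreducible smooth projective curve `X` over an
algebraically closed field `k`, a finite morphism `φ : X → P¹`, together with the
facts used: line bundles `O(a)`, finite direct sums, isomorphism, the dimensions of
`H⁰` and `H¹`, Grothendieck's splitting theorem on `P¹`, the cohomology of `O(a)`,
and the equality `Hʲ(X, E) = Hʲ(P¹, φ_*E)` for the finite morphism `φ`. -/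
structure FiniteToP1Setup (k : Type*) [Field k] [IsAlgClosed k] where
  /-- vector bundles on `P¹_k` -/
  P1Bundle : Type*
  /-- isomorphism of bundles on `P¹` -/
  P1Iso : P1Bundle → P1Bundle → Prop
  /-- the line bundle `O_{P¹}(a)` -/
  O : ℤ → P1Bundle
  /-- finite direct sums of bundles on `P¹` -/
  directSum : ∀ {n : ℕ}, (Fin n → P1Bundle) → P1Bundle
  /-- `dim H⁰(P¹, ·)` -/
  h0P1 : P1Bundle → ℕ
  /-- `dim H¹(P¹, ·)` -/
  h1P1 : P1Bundle → ℕ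
  /-- vector bundles on the curve `X` -/
  XBundle : Type*
  /-- `dim H⁰(X, ·)` -/
  h0X : XBundle → ℕ
  /-- `dim H¹(X, ·)` -/
  h1X : XBundle → ℕ
  /-- the direct image `φ_*` along the finite morphism `φ : X → P¹` -/
  pushforward : XBundle → P1Bundle
  /-- Grothendieck's splitting theorem: every vector bundle on `P¹` is a direct sum
  of line bundles -/
  grothendieck : ∀ V : P1Bundle, ∃ (n : ℕ) (a : Fin n → ℤ),
    P1Iso V (directSum fun i => O (a i))
  /-- `dim H⁰(P¹, O(a)) = a + 1` for `a ≥ 0`, and `0` otherwise -/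
  h0_O : ∀ a : ℤ, h0P1 (O a) = if 0 ≤ a then (a + 1).toNat else 0
  /-- `dim H¹(P¹, O(a)) = -a - 1` for `a ≤ -2`, and `0` otherwise -/
  h1_O : ∀ a : ℤ, h1P1 (O a) = if a ≤ -2 then (-a - 1).toNat else 0
  /-- `H⁰` of a direct sum -/
  h0_directSum : ∀ {n : ℕ} (V : Fin n → P1Bundle), h0P1 (directSum V) = ∑ i, h0P1 (V i)
  /-- `H¹` of a direct sum -/
  h1_directSum : ∀ {n : ℕ} (V : Fin n → P1Bundle), h1P1 (directSum V) = ∑ i, h1P1 (V i)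
  /-- isomorphic bundles have equal `H⁰` -/
  h0_iso : ∀ {V W : P1Bundle}, P1Iso V W → h0P1 V = h0P1 W
  /-- isomorphic bundles have equal `H¹` -/
  h1_iso : ∀ {V W : P1Bundle}, P1Iso V W → h1P1 V = h1P1 W
  /-- since `φ` is finite, `H⁰(P¹, φ_*E) = H⁰(X, E)` -/
  h0_push : ∀ E : XBundle, h0P1 (pushforward E) = h0X E
  /-- since `φ` is finite, `H¹(P¹, φ_*E) = H¹(X, E)` -/
  h1_push : ∀ E : XBundle, h1P1 (pushforward E) = h1X E

/-- Let `X` be an irreducible smooth projective curve over an algebraically closed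
field `k`, `φ : X → P¹` a finite morphism, and `E` a vector bundle on `X` with
`H⁰(X, E) = 0 = H¹(X, E)`.  Then `φ_*E` is isomorphic to a direct sum of copies of
`O_{P¹}(-1)`. -/
theorem pushforward_is_sum_of_O_neg_one {k : Type*} [Field k] [IsAlgClosed k]
    (S : FiniteToP1Setup k) (E : S.XBundle) (hE0 : S.h0X E = 0) (hE1 : S.h1X E = 0) :
    ∃ r : ℕ, S.P1Iso (S.pushforward E) (S.directSum fun _ : Fin r => S.O (-1)) := by
  obtain ⟨n, a, hiso⟩ := S.grothendieck (S.pushforward E)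
  have h0 : ∑ i, S.h0P1 (S.O (a i)) = 0 := by
    rw [← S.h0_directSum, ← S.h0_iso hiso, S.h0_push, hE0]
  have h1 : ∑ i, S.h1P1 (S.O (a i)) = 0 := by
    rw [← S.h1_directSum, ← S.h1_iso hiso, S.h1_push, hE1]
  have ha : ∀ i, a i = -1 := by
    intro i
    have e0 : S.h0P1 (S.O (a i)) = 0 :=
      Finset.sum_eq_zero_iff.mp h0 i (Finset.mem_univ i)
    have e1 : S.h1P1 (S.O (a i)) = 0 :=
      Finset.sum_eq_zero_iff.mp h1 i (Finset.mem_univ i)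
    rw [S.h0_O] at e0
    rw [S.h1_O] at e1
    by_contra hne
    rcases lt_or_gt_of_ne hne with h | h
    · have : a i ≤ -2 := by omega
      simp [this] at e1
      omega
    · have : 0 ≤ a i := by omega
      simp [this] at e0
      omega
  refine ⟨n, ?_⟩
  have : (fun i : Fin n => S.O (a i)) = fun _ : Fin n => S.O (-1) := by
    funext i; rw [ha i]
  rwa [this] at hiso
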